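/- arXiv:2202.13776 — 3 statements merged into one kernel-verified Lean document; each statement's English description precedes it below -/
import Mathlib

section
/- Let n, s ≥ 1. Let A be a nonnegative n×n real matrix, b and c nonnegative vectors in ℝⁿ, and d ≥ 0 a real number, and let M be the (n+1)×(n+1) block matrix M = [[A, b],[cᵀ, d]]. Let B be the n×s matrix each of whose columns equals b, let C be a nonnegative s×n matrix whose j-th column sum equals c_j for every j, and let D be a nonnegative s×s matrix all of whose column sums equal d. Set M̃ = [[A, B],[C, D]]. Then the spectral radius of M̃ equals the spectral radius of M. -/
/-!
Let `S = [[I, 0], [0, 1ᵀ]]` lump the last `s` coordinates into one. The column sum conditions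
say exactly that `S M̃ = M S`. Hence a left eigenvector `u` of `M` gives the left eigenvector
`u S ≠ 0` of `M̃`, so `σ(M) ⊆ σ(M̃)`. Conversely, for a right eigenvector `v` of `M̃`, either
`S v ≠ 0` is an eigenvector of `M`, or `v` vanishes on the first block and its second block is an
eigenvector of `D`; so `σ(M̃) ⊆ σ(M) ∪ σ(D)`. Every eigenvalue of `D` has modulus at most its
column sum `d`, and `d`, a diagonal entry of the nonnegative matrix `M`, is at most `ρ(M)` by
Gelfand's formula, since `d ^ k ≤ (M ^ k)ᵢᵢ ≤ ‖M ^ k‖`.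
-/

open Matrix

/-- Spectral radius of a real square matrix: the maximum of the moduli of its
complex eigenvalues (elements of the spectrum of the matrix over `ℂ`). -/
noncomputable def specRad {n : Type*} [Fintype n] [DecidableEq n]
    (M : Matrix n n ℝ) : ℝ :=
  sSup ((fun z : ℂ => ‖z‖) '' spectrum ℂ (M.map (algebraMap ℝ ℂ)))

attribute [local instance] Matrix.linftyOpSeminormedAddCommGroup Matrix.linftyOpNormedRing
  Matrix.linftyOpNormedAlgebra

namespace Matrix

section Eigenvectors

variable {K ι : Type*} [Field K] [Fintype ι] [DecidableEq ι]

theorem mem_spectrum_iff_exists_mulVec_eq_smul {M : Matrix ι ι K} {z : K} :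
    z ∈ spectrum K M ↔ ∃ v ≠ 0, M *ᵥ v = z • v := by
  rw [← spectrum_toLin', ← Module.End.hasEigenvalue_iff_mem_spectrum,
    Module.End.hasEigenvalue_iff, Submodule.ne_bot_iff]
  simp [and_comm]

theorem spectrum_transpose (M : Matrix ι ι K) : spectrum K Mᵀ = spectrum K M := by
  ext z
  simp only [mem_spectrum_iff_isRoot_charpoly, charpoly_transpose]

theorem mem_spectrum_iff_exists_vecMul_eq_smul {M : Matrix ι ι K} {z : K} :
    z ∈ spectrum K M ↔ ∃ v ≠ 0, v ᵥ* M = z • v := by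
  simp only [← spectrum_transpose M, mem_spectrum_iff_exists_mulVec_eq_smul, mulVec_transpose]

variable {ι' : Type*} [Fintype ι'] {M : Matrix ι ι K} {M' : Matrix ι' ι' K} {S : Matrix ι ι' K}

theorem spectrum_subset_of_mul_eq_mul [DecidableEq ι'] (h : S * M' = M * S)
    (hS : Function.Injective S.vecMul) : spectrum K M ⊆ spectrum K M' := by
  intro z hz
  obtain ⟨u, hu, huM⟩ := mem_spectrum_iff_exists_vecMul_eq_smul.mp hz
  refine mem_spectrum_iff_exists_vecMul_eq_smul.mpr ⟨u ᵥ* S, ?_, ?_⟩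
  · exact fun h0 => hu (hS (h0.trans (zero_vecMul S).symm))
  · rw [vecMul_vecMul, h, ← vecMul_vecMul, huM, smul_vecMul]

theorem mem_spectrum_of_mul_eq_mul {v : ι' → K} {z : K} (h : S * M' = M * S)
    (hv : M' *ᵥ v = z • v) (hSv : S *ᵥ v ≠ 0) : z ∈ spectrum K M :=
  mem_spectrum_iff_exists_mulVec_eq_smul.mpr
    ⟨S *ᵥ v, hSv, by rw [mulVec_mulVec, ← h, ← mulVec_mulVec, hv, mulVec_smul]⟩

theorem mem_spectrum_of_fromBlocks_mulVec_eq_smul {κ : Type*} [Fintype κ] [DecidableEq κ]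
    {A : Matrix κ κ K} {B : Matrix κ ι K} {C : Matrix ι κ K} {v : κ ⊕ ι → K} {z : K}
    (hv : v ≠ 0) (hinl : ∀ k, v (.inl k) = 0) (h : fromBlocks A B C M *ᵥ v = z • v) :
    z ∈ spectrum K M := by
  have hv' : v = Sum.elim (0 : κ → K) (v ∘ Sum.inr) := by
    ext (k | i)
    exacts [hinl k, rfl]
  refine mem_spectrum_iff_exists_mulVec_eq_smul.mpr ⟨v ∘ Sum.inr, ?_, ?_⟩
  · exact fun h0 => hv (by rw [hv', h0, Sum.elim_zero_zero])
  · rw [hv'] at h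
    ext i
    simpa [fromBlocks_mulVec] using congrFun h (.inr i)

end Eigenvectors

section ColSumExpansion

variable {R S ι κ : Type*}

def bordered (A : Matrix ι ι R) (b c : ι → R) (d : R) : Matrix (ι ⊕ Fin 1) (ι ⊕ Fin 1) R :=
  fromBlocks A (of fun i _ => b i) (of fun _ j => c j) (of fun _ _ => d)

/-- A column sum expansion of `bordered A b c d` when the column sums of `C` are `c` and those of
`D` are `d`. -/
def colSumExpansion (A : Matrix ι ι R) (b : ι → R) (C : Matrix κ ι R) (D : Matrix κ κ R) :
    Matrix (ι ⊕ κ) (ι ⊕ κ) R :=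
  fromBlocks A (of fun i _ => b i) C D

theorem bordered_map (A : Matrix ι ι R) (b c : ι → R) (d : R) (f : R → S) :
    (bordered A b c d).map f = bordered (A.map f) (f ∘ b) (f ∘ c) (f d) :=
  fromBlocks_map ..

theorem colSumExpansion_map (A : Matrix ι ι R) (b : ι → R) (C : Matrix κ ι R)
    (D : Matrix κ κ R) (f : R → S) :
    (colSumExpansion A b C D).map f = colSumExpansion (A.map f) (f ∘ b) (C.map f) (D.map f) :=
  fromBlocks_map ..

variable [Semiring R] [DecidableEq ι]

variable (R ι κ) in
def lumping : Matrix (ι ⊕ Fin 1) (ι ⊕ κ) R := fromBlocks 1 0 0 (of fun _ _ => 1)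

variable [Fintype ι]

theorem lumping_mul_colSumExpansion [Fintype κ] {A : Matrix ι ι R} {b c : ι → R} {d : R}
    {C : Matrix κ ι R} {D : Matrix κ κ R} (hC : ∀ j, ∑ i, C i j = c j)
    (hD : ∀ j, ∑ i, D i j = d) :
    lumping R ι κ * colSumExpansion A b C D = bordered A b c d * lumping R ι κ := by
  rw [lumping, colSumExpansion, bordered, fromBlocks_multiply, fromBlocks_multiply]
  simp only [Matrix.one_mul, Matrix.mul_one, Matrix.zero_mul, Matrix.mul_zero, add_zero,
    zero_add, fromBlocks_inj, true_and]
  refine ⟨?_, ?_, ?_⟩ <;> ext <;> simp [Matrix.mul_apply, hC, hD]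

theorem vecMul_lumping_injective [Nonempty κ] : Function.Injective (lumping R ι κ).vecMul := by
  intro u u' h
  obtain ⟨hinl, hinr⟩ : (∀ i, u (.inl i) = u' (.inl i)) ∧ ∀ _ : κ, u (.inr 0) = u' (.inr 0) := by
    simpa [lumping, vecMul_fromBlocks, vecMul, dotProduct, funext_iff] using h
  ext (i | i)
  · exact hinl i
  · rw [Subsingleton.elim i 0]
    exact hinr (Classical.arbitrary κ)

theorem lumping_mulVec_inl [Fintype κ] (v : ι ⊕ κ → R) (i : ι) :
    (lumping R ι κ *ᵥ v) (.inl i) = v (.inl i) := by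
  simp [lumping, fromBlocks_mulVec]

end ColSumExpansion

section SpectrumColSumExpansion

variable {K ι κ : Type*} [Field K] [Fintype ι] [DecidableEq ι] [Fintype κ] [DecidableEq κ]
  {A : Matrix ι ι K} {b c : ι → K} {d : K} {C : Matrix κ ι K} {D : Matrix κ κ K}

theorem spectrum_bordered_subset [Nonempty κ] (hC : ∀ j, ∑ i, C i j = c j)
    (hD : ∀ j, ∑ i, D i j = d) :
    spectrum K (bordered A b c d) ⊆ spectrum K (colSumExpansion A b C D) :=
  spectrum_subset_of_mul_eq_mul (lumping_mul_colSumExpansion hC hD) vecMul_lumping_injective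

theorem spectrum_colSumExpansion_subset (hC : ∀ j, ∑ i, C i j = c j)
    (hD : ∀ j, ∑ i, D i j = d) :
    spectrum K (colSumExpansion A b C D) ⊆ spectrum K (bordered A b c d) ∪ spectrum K D := by
  intro z hz
  obtain ⟨v, hv, hMv⟩ := mem_spectrum_iff_exists_mulVec_eq_smul.mp hz
  by_cases hSv : lumping K ι κ *ᵥ v = 0
  · refine .inr (mem_spectrum_of_fromBlocks_mulVec_eq_smul hv (fun i => ?_) hMv)
    rw [← lumping_mulVec_inl v i, hSv, Pi.zero_apply]
  · exact .inl (mem_spectrum_of_mul_eq_mul (lumping_mul_colSumExpansion hC hD) hMv hSv)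

end SpectrumColSumExpansion

theorem norm_le_of_mem_spectrum_of_colSum_le {m : Type*} [Fintype m] [DecidableEq m]
    [Nonempty m] {N : Matrix m m ℂ} {r : ℝ} (hN : ∀ j, ∑ i, ‖N i j‖ ≤ r) {z : ℂ}
    (hz : z ∈ spectrum ℂ N) : ‖z‖ ≤ r := by
  rw [← spectrum_transpose] at hz
  refine (spectrum.norm_le_norm_of_mem hz).trans ?_
  have hr : 0 ≤ r :=
    (Finset.sum_nonneg fun _ _ => norm_nonneg _).trans (hN (Classical.arbitrary m))
  lift r to NNReal using hr
  rw [linfty_opNorm_def, NNReal.coe_le_coe]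
  exact Finset.sup_le fun j _ => by simpa [← NNReal.coe_le_coe] using hN j

theorem norm_apply_le_linfty_opNorm {m n α : Type*} [Fintype m] [Fintype n]
    [SeminormedAddCommGroup α] (N : Matrix m n α) (i : m) (j : n) : ‖N i j‖ ≤ ‖N‖ := by
  rw [linfty_opNorm_def, ← coe_nnnorm, NNReal.coe_le_coe]
  exact (Finset.single_le_sum (fun _ _ => zero_le) (Finset.mem_univ j)).trans
    (Finset.le_sup (f := fun i => ∑ j, ‖N i j‖₊) (Finset.mem_univ i))

theorem pow_diag_le_pow_apply {m R : Type*} [Fintype m] [DecidableEq m] [Semiring R]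
    [PartialOrder R] [IsOrderedRing R] {M : Matrix m m R} (hM : ∀ i j, 0 ≤ M i j) (k : ℕ)
    (i : m) : M i i ^ k ≤ (M ^ k) i i := by
  induction k with
  | zero => simp
  | succ k ih =>
    calc M i i ^ (k + 1) = M i i ^ k * M i i := pow_succ _ _
      _ ≤ (M ^ k) i i * M i i := mul_le_mul_of_nonneg_right ih (hM i i)
      _ ≤ ∑ l, (M ^ k) i l * M l i :=
        Finset.single_le_sum (f := fun l => (M ^ k) i l * M l i)
          (fun l _ => mul_nonneg (pow_apply_nonneg hM k i l) (hM l i)) (Finset.mem_univ i)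
      _ = (M ^ (k + 1)) i i := by rw [pow_succ, mul_apply]

end Matrix

section SpecRad

variable {m : Type*} [Fintype m] [DecidableEq m]

theorem norm_le_specRad (M : Matrix m m ℝ) {z : ℂ}
    (hz : z ∈ spectrum ℂ (M.map (algebraMap ℝ ℂ))) : ‖z‖ ≤ specRad M :=
  le_csSup ((finite_spectrum _).image _).bddAbove ⟨z, hz, rfl⟩

theorem specRad_le [Nonempty m] (M : Matrix m m ℝ) {r : ℝ}
    (h : ∀ z ∈ spectrum ℂ (M.map (algebraMap ℝ ℂ)), ‖z‖ ≤ r) : specRad M ≤ r :=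
  csSup_le ((spectrum.nonempty _).image _) (Set.forall_mem_image.2 h)

theorem specRad_nonneg [Nonempty m] (M : Matrix m m ℝ) : 0 ≤ specRad M := by
  obtain ⟨z, hz⟩ := spectrum.nonempty (M.map (algebraMap ℝ ℂ))
  exact (norm_nonneg z).trans (norm_le_specRad M hz)

theorem spectralRadius_le_ofReal_specRad (M : Matrix m m ℝ) :
    spectralRadius ℂ (M.map (algebraMap ℝ ℂ)) ≤ ENNReal.ofReal (specRad M) :=
  iSup₂_le fun z hz => by
    rw [← enorm_eq_nnnorm, ← ofReal_norm]
    exact ENNReal.ofReal_le_ofReal (norm_le_specRad M hz)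

theorem diag_le_specRad [Nonempty m] {M : Matrix m m ℝ} (hM : ∀ i j, 0 ≤ M i j) (i : m) :
    M i i ≤ specRad M := by
  let N := (algebraMap ℝ ℂ).mapMatrix M
  have hpow (k : ℕ) : ENNReal.ofReal (M i i) ^ k ≤ ‖N ^ k‖₊ := by
    rw [← ENNReal.ofReal_pow (hM i i), ← enorm_eq_nnnorm, ← ofReal_norm]
    refine ENNReal.ofReal_le_ofReal ((pow_diag_le_pow_apply hM k i).trans ?_)
    calc (M ^ k) i i = ‖(N ^ k) i i‖ := by
          rw [← map_pow, RingHom.mapMatrix_apply, map_apply, Complex.coe_algebraMap,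
            Complex.norm_real, Real.norm_of_nonneg (pow_apply_nonneg hM k i i)]
      _ ≤ ‖N ^ k‖ := norm_apply_le_linfty_opNorm _ i i
  have hgelfand : ENNReal.ofReal (M i i) ≤ spectralRadius ℂ N := by
    refine ge_of_tendsto (spectrum.pow_nnnorm_pow_one_div_tendsto_nhds_spectralRadius N) ?_
    filter_upwards [Filter.eventually_ne_atTop 0] with k hk
    calc ENNReal.ofReal (M i i) = (ENNReal.ofReal (M i i) ^ k) ^ (1 / k : ℝ) := by
          rw [← ENNReal.rpow_natCast, one_div, ENNReal.rpow_rpow_inv (by exact_mod_cast hk)]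
      _ ≤ _ := ENNReal.rpow_le_rpow (hpow k) (by positivity)
  exact (ENNReal.ofReal_le_ofReal_iff (specRad_nonneg M)).1
    (hgelfand.trans (spectralRadius_le_ofReal_specRad M))

end SpecRad

theorem colSumExpansion_specRad_eq_general
    {n s : ℕ} (hs : 1 ≤ s)
    (A : Matrix (Fin n) (Fin n) ℝ) (b c : Fin n → ℝ) (d : ℝ)
    (hA : ∀ i j, 0 ≤ A i j) (hb : ∀ i, 0 ≤ b i) (hc : ∀ i, 0 ≤ c i) (hd : 0 ≤ d)
    (C : Matrix (Fin s) (Fin n) ℝ)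
    (hCcol : ∀ j, ∑ i, C i j = c j)
    (D : Matrix (Fin s) (Fin s) ℝ) (hD : ∀ i j, 0 ≤ D i j)
    (hDcol : ∀ j, ∑ i, D i j = d) :
    specRad (Matrix.fromBlocks A
        (Matrix.of fun (i : Fin n) (_ : Fin s) => b i) C D) =
      specRad (Matrix.fromBlocks A
        (Matrix.of fun (i : Fin n) (_ : Fin 1) => b i)
        (Matrix.of fun (_ : Fin 1) (j : Fin n) => c j)
        (Matrix.of fun (_ : Fin 1) (_ : Fin 1) => d)) := by
  change specRad (colSumExpansion A b C D) = specRad (bordered A b c d)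
  have : Nonempty (Fin s) := Fin.pos_iff_nonempty.mp hs
  set φ := algebraMap ℝ ℂ
  have hC' (j) : ∑ i, C.map φ i j = (φ ∘ c) j := by simp [← hCcol j]
  have hD' (j) : ∑ i, D.map φ i j = φ d := by simp [← hDcol j]
  have hsub := spectrum_colSumExpansion_subset (A := A.map φ) (b := φ ∘ b) hC' hD'
  have hsup := spectrum_bordered_subset (A := A.map φ) (b := φ ∘ b) hC' hD'
  rw [← colSumExpansion_map, ← bordered_map] at hsub hsup
  have hnonneg : ∀ i j, 0 ≤ bordered A b c d i j := by
    rintro (i | i) (j | j)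
    exacts [hA i j, hb i, hc j, hd]
  have hdM : d ≤ specRad (bordered A b c d) := diag_le_specRad hnonneg (.inr 0)
  refine le_antisymm (specRad_le _ fun z hz => ?_)
    (specRad_le _ fun z hz => norm_le_specRad _ (hsup hz))
  rcases hsub hz with hz | hz
  · exact norm_le_specRad _ hz
  · refine (norm_le_of_mem_spectrum_of_colSum_le (fun j => ?_) hz).trans hdM
    simp [φ, abs_of_nonneg (hD _ _), hDcol]

/-- A column sum expansion of a nonnegative matrix on its last diagonal entry
preserves the spectral radius. -/
theorem colSumExpansion_specRad_eq
    {n s : ℕ} (hn : 1 ≤ n) (hs : 1 ≤ s)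
    (A : Matrix (Fin n) (Fin n) ℝ) (b c : Fin n → ℝ) (d : ℝ)
    (hA : ∀ i j, 0 ≤ A i j) (hb : ∀ i, 0 ≤ b i) (hc : ∀ i, 0 ≤ c i) (hd : 0 ≤ d)
    (C : Matrix (Fin s) (Fin n) ℝ) (hC : ∀ i j, 0 ≤ C i j)
    (hCcol : ∀ j, ∑ i, C i j = c j)
    (D : Matrix (Fin s) (Fin s) ℝ) (hD : ∀ i j, 0 ≤ D i j)
    (hDcol : ∀ j, ∑ i, D i j = d) :
    specRad (Matrix.fromBlocks A
        (Matrix.of fun (i : Fin n) (_ : Fin s) => b i) C D) =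
      specRad (Matrix.fromBlocks A
        (Matrix.of fun (i : Fin n) (_ : Fin 1) => b i)
        (Matrix.of fun (_ : Fin 1) (j : Fin n) => c j)
        (Matrix.of fun (_ : Fin 1) (_ : Fin 1) => d)) :=
  colSumExpansion_specRad_eq_general hs A b c d hA hb hc hd C hCcol D hD hDcol
end

section
/- Let k ≥ 1 and let s : Fin k → ℕ with s i ≥ 1 for all i. Let M be a nonnegative real square matrix indexed by Σ i, Fin (s i), partitioned into k² blocks with square diagonal blocks. Define the upward row sum contraction M↑ as the k×k matrix with entries M↑ i j = max over u ∈ Fin (s i) of Σ_{v ∈ Fin (s j)} M ((i,u),(j,v)) (the maximum row sum within block (i,j)). Then ρ(M) ≤ ρ(M↑). -/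
open Matrix

/-!
Let `z` be an eigenvalue of `M` with eigenvector `x`, and let `y i` be the largest modulus of an
entry of `x` in block `i`. Taking absolute values in `M x = z x` and bounding each entry of `x`
in block `j` by `y j` gives `|z| y ≤ M↑ y` entrywise, with `y ≥ 0` nonzero. Iterating,
`|z|ᵐ y ≤ (M↑)ᵐ y`, so `|z|ᵐ ≤ ‖(M↑)ᵐ‖∞` for all `m`, and Gelfand's formula yields
`|z| ≤ ρ(M↑)`.
-/

open Finset Filter

section SpectralRadius

variable {n : Type*} [Fintype n]

theorem Matrix.mulVec_mono_of_nonneg {m α : Type*} [Semiring α] [PartialOrder α]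
    [IsOrderedRing α] {A : Matrix m n α} (hA : ∀ i j, 0 ≤ A i j) {v w : n → α} (hvw : v ≤ w) :
    A *ᵥ v ≤ A *ᵥ w := fun i =>
  sum_le_sum fun j _ => mul_le_mul_of_nonneg_left (hvw j) (hA i j)

theorem Pi.norm_le_norm_of_nonneg_of_le {v w : n → ℝ} (hv : 0 ≤ v) (hvw : v ≤ w) : ‖v‖ ≤ ‖w‖ :=
  (pi_norm_le_iff_of_nonneg (norm_nonneg w)).2 fun i => by
    rw [Real.norm_of_nonneg (hv i)]
    exact (hvw i).trans ((le_abs_self _).trans (norm_le_pi_norm w i))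

theorem norm_map_ofReal_mulVec_apply_le {m : Type*} {A : Matrix m n ℝ} (hA : ∀ i j, 0 ≤ A i j)
    (x : n → ℂ) (i : m) : ‖(A.map (algebraMap ℝ ℂ) *ᵥ x) i‖ ≤ (A *ᵥ fun j => ‖x j‖) i :=
  (norm_sum_le _ _).trans_eq <| sum_congr rfl fun j _ => by
    simp only [norm_mul, Matrix.map_apply, Complex.coe_algebraMap, Complex.norm_real,
      Real.norm_of_nonneg (hA i j)]

variable [DecidableEq n]

theorem specRad_nonneg_s4 (A : Matrix n n ℝ) : 0 ≤ specRad A :=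
  Real.sSup_nonneg <| by
    rintro _ ⟨z, -, rfl⟩
    exact norm_nonneg z

theorem norm_le_specRad_of_mem_spectrum {A : Matrix n n ℝ} {z : ℂ}
    (hz : z ∈ spectrum ℂ (A.map (algebraMap ℝ ℂ))) : ‖z‖ ≤ specRad A :=
  le_csSup ((Matrix.finite_spectrum _).image _).bddAbove ⟨z, hz, rfl⟩

theorem Matrix.exists_mulVec_eq_smul_of_mem_spectrum {K : Type*} [Field K] {A : Matrix n n K}
    {z : K} (hz : z ∈ spectrum K A) : ∃ x ≠ 0, A *ᵥ x = z • x := by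
  rw [← Matrix.spectrum_toLin', ← Module.End.hasEigenvalue_iff_mem_spectrum] at hz
  obtain ⟨x, hx⟩ := hz.exists_hasEigenvector
  exact ⟨x, hx.2, by simpa using hx.apply_eq_smul⟩

theorem spectrum.ofReal_le_spectralRadius_of_forall_pow_le {A : Type*} [NormedRing A]
    [NormedAlgebra ℂ A] [CompleteSpace A] (a : A) {c : ℝ} (hc : 0 ≤ c)
    (h : ∀ m : ℕ, c ^ m ≤ ‖a ^ m‖) : ENNReal.ofReal c ≤ spectralRadius ℂ a := by
  refine ge_of_tendsto (spectrum.pow_norm_pow_one_div_tendsto_nhds_spectralRadius a) ?_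
  filter_upwards [eventually_ne_atTop 0] with m hm
  refine ENNReal.ofReal_le_ofReal ?_
  calc c = (c ^ m) ^ (1 / m : ℝ) := by rw [one_div, Real.pow_rpow_inv_natCast hc hm]
    _ ≤ ‖a ^ m‖ ^ (1 / m : ℝ) := by gcongr; exact h m

theorem spectralRadius_map_le_specRad (A : Matrix n n ℝ) :
    spectralRadius ℂ (A.map (algebraMap ℝ ℂ)) ≤ ENNReal.ofReal (specRad A) :=
  iSup₂_le fun z hz => by
    rw [← ENNReal.ofReal_coe_nnreal, coe_nnnorm]
    exact ENNReal.ofReal_le_ofReal (norm_le_specRad_of_mem_spectrum hz)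

attribute [local instance] Matrix.linftyOpNormedRing Matrix.linftyOpNormedAlgebra

theorem le_specRad_of_forall_pow_le_norm_pow {A : Matrix n n ℝ} {c : ℝ} (hc : 0 ≤ c)
    (h : ∀ m : ℕ, c ^ m ≤ ‖A ^ m‖) : c ≤ specRad A := by
  have hmap : ∀ m : ℕ, ‖A.map (algebraMap ℝ ℂ) ^ m‖ = ‖A ^ m‖ := fun m => by
    rw [← Matrix.map_pow, ← coe_nnnorm, ← coe_nnnorm]
    simp [Matrix.linfty_opNNNorm_def, Complex.nnnorm_real]
  refine (ENNReal.ofReal_le_ofReal_iff (specRad_nonneg_s4 A)).1 ?_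
  calc ENNReal.ofReal c ≤ spectralRadius ℂ (A.map (algebraMap ℝ ℂ)) :=
        spectrum.ofReal_le_spectralRadius_of_forall_pow_le _ hc fun m => hmap m ▸ h m
    _ ≤ ENNReal.ofReal (specRad A) := spectralRadius_map_le_specRad A

theorem le_specRad_of_smul_le_mulVec {A : Matrix n n ℝ} (hA : ∀ i j, 0 ≤ A i j) {c : ℝ}
    (hc : 0 ≤ c) {y : n → ℝ} (hy : 0 ≤ y) (hy0 : y ≠ 0) (h : c • y ≤ A *ᵥ y) :
    c ≤ specRad A := by
  have hpow : ∀ m : ℕ, c ^ m • y ≤ (A ^ m) *ᵥ y := by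
    intro m
    induction m with
    | zero => simp
    | succ m ih =>
      calc c ^ (m + 1) • y = c ^ m • (c • y) := by rw [pow_succ, mul_smul]
        _ ≤ c ^ m • (A *ᵥ y) := smul_le_smul_of_nonneg_left h (pow_nonneg hc m)
        _ = A *ᵥ (c ^ m • y) := (Matrix.mulVec_smul A _ y).symm
        _ ≤ A *ᵥ ((A ^ m) *ᵥ y) := Matrix.mulVec_mono_of_nonneg hA ih
        _ = (A ^ (m + 1)) *ᵥ y := by rw [Matrix.mulVec_mulVec, pow_succ']
  refine le_specRad_of_forall_pow_le_norm_pow hc fun m => ?_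
  refine le_of_mul_le_mul_right ?_ (norm_pos_iff.2 hy0)
  calc c ^ m * ‖y‖ = ‖c ^ m • y‖ := by
        rw [norm_smul, Real.norm_of_nonneg (pow_nonneg hc m)]
    _ ≤ ‖(A ^ m) *ᵥ y‖ :=
        Pi.norm_le_norm_of_nonneg_of_le (smul_nonneg (pow_nonneg hc m) hy) (hpow m)
    _ ≤ ‖A ^ m‖ * ‖y‖ := Matrix.linfty_opNorm_mulVec _ _

end SpectralRadius

section Blocks

variable {ι : Type*} {κ : ι → Type*} [∀ i, Fintype (κ i)] [∀ i, Nonempty (κ i)]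

def blockSup {α : Type*} [SemilatticeSup α] (x : (Σ i, κ i) → α) : ι → α :=
  fun i => univ.sup' univ_nonempty fun u => x ⟨i, u⟩

theorem le_blockSup {α : Type*} [SemilatticeSup α] (x : (Σ i, κ i) → α) (i : ι) (u : κ i) :
    x ⟨i, u⟩ ≤ blockSup x i :=
  le_sup' (fun u => x ⟨i, u⟩) (mem_univ u)

theorem blockSup_nonneg {x : (Σ i, κ i) → ℝ} (hx : 0 ≤ x) : 0 ≤ blockSup (ι := ι) x := fun i =>
  (hx ⟨i, Classical.arbitrary _⟩).trans (le_blockSup x i _)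

def upwardRowSumContraction (M : Matrix (Σ i, κ i) (Σ i, κ i) ℝ) : Matrix ι ι ℝ :=
  of fun i j => univ.sup' univ_nonempty fun u => ∑ v, M ⟨i, u⟩ ⟨j, v⟩

variable {M : Matrix (Σ i, κ i) (Σ i, κ i) ℝ}

theorem upwardRowSumContraction_nonneg (hM : ∀ p q, 0 ≤ M p q) (i j : ι) :
    0 ≤ upwardRowSumContraction M i j :=
  (sum_nonneg fun v _ => hM _ ⟨j, v⟩).trans
    (le_sup' (fun u => ∑ v, M ⟨i, u⟩ ⟨j, v⟩) (mem_univ (Classical.arbitrary _)))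

variable [Fintype ι]

theorem mulVec_apply_le_upwardRowSumContraction_mulVec_blockSup (hM : ∀ p q, 0 ≤ M p q)
    {x : (Σ i, κ i) → ℝ} (hx : 0 ≤ x) (i : ι) (u : κ i) :
    (M *ᵥ x) ⟨i, u⟩ ≤ (upwardRowSumContraction M *ᵥ blockSup x) i := by
  calc (M *ᵥ x) ⟨i, u⟩ = ∑ j, ∑ v, M ⟨i, u⟩ ⟨j, v⟩ * x ⟨j, v⟩ := Fintype.sum_sigma _
    _ ≤ ∑ j, ∑ v, M ⟨i, u⟩ ⟨j, v⟩ * blockSup x j := by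
        gcongr with j _ v _
        exacts [hM _ _, le_blockSup x j v]
    _ = ∑ j, (∑ v, M ⟨i, u⟩ ⟨j, v⟩) * blockSup x j := by simp only [sum_mul]
    _ ≤ ∑ j, upwardRowSumContraction M i j * blockSup x j := by
        gcongr with j _
        exacts [blockSup_nonneg hx j, le_sup' (fun u => ∑ v, M ⟨i, u⟩ ⟨j, v⟩) (mem_univ u)]

theorem norm_le_specRad_upwardRowSumContraction_of_mem_spectrum [DecidableEq ι]
    [∀ i, DecidableEq (κ i)] (hM : ∀ p q, 0 ≤ M p q) {z : ℂ}
    (hz : z ∈ spectrum ℂ (M.map (algebraMap ℝ ℂ))) :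
    ‖z‖ ≤ specRad (upwardRowSumContraction M) := by
  obtain ⟨x, hx0, hx⟩ := Matrix.exists_mulVec_eq_smul_of_mem_spectrum hz
  set w : (Σ i, κ i) → ℝ := fun p => ‖x p‖
  have hw : 0 ≤ w := fun p => norm_nonneg (x p)
  have hw0 : blockSup w ≠ 0 := by
    obtain ⟨⟨i, u⟩, hxp⟩ := Function.ne_iff.1 hx0
    exact Function.ne_iff.2 ⟨i, ((norm_pos_iff.2 hxp).trans_le (le_blockSup w i u)).ne'⟩
  refine le_specRad_of_smul_le_mulVec (upwardRowSumContraction_nonneg hM) (norm_nonneg z)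
    (blockSup_nonneg hw) hw0 fun i => ?_
  rw [Pi.smul_apply, smul_eq_mul, blockSup, mul₀_sup' (norm_nonneg z)]
  refine sup'_le _ _ fun u _ => ?_
  calc ‖z‖ * w ⟨i, u⟩ = ‖(M.map (algebraMap ℝ ℂ) *ᵥ x) ⟨i, u⟩‖ := by
        rw [hx, Pi.smul_apply, smul_eq_mul, norm_mul]
    _ ≤ (M *ᵥ w) ⟨i, u⟩ := norm_map_ofReal_mulVec_apply_le hM x _
    _ ≤ _ := mulVec_apply_le_upwardRowSumContraction_mulVec_blockSup hM hw i u

end Blocks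

theorem specRad_le_upwardRowSumContraction_general
    {k : ℕ} (s : Fin k → ℕ) (hs : ∀ i, 1 ≤ s i)
    (M : Matrix (Σ i, Fin (s i)) (Σ i, Fin (s i)) ℝ)
    (hM : ∀ p q, 0 ≤ M p q) :
    specRad M ≤
      specRad (Matrix.of fun (i j : Fin k) =>
        Finset.univ.sup'
          (Finset.univ_nonempty_iff.mpr (Fin.pos_iff_nonempty.mp (hs i)))
          (fun u : Fin (s i) => ∑ v : Fin (s j), M ⟨i, u⟩ ⟨j, v⟩)) := by
  have : ∀ i, Nonempty (Fin (s i)) := fun i => Fin.pos_iff_nonempty.mp (hs i)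
  refine Real.sSup_le ?_ (specRad_nonneg_s4 _)
  rintro _ ⟨z, hz, rfl⟩
  exact norm_le_specRad_upwardRowSumContraction_of_mem_spectrum hM hz

/-- The spectral radius of a nonnegative matrix is at most the spectral radius
of its upward row sum contraction (maximum row sum in each block, with square
diagonal blocks). -/
theorem specRad_le_upwardRowSumContraction
    {k : ℕ} (hk : 1 ≤ k) (s : Fin k → ℕ) (hs : ∀ i, 1 ≤ s i)
    (M : Matrix (Σ i, Fin (s i)) (Σ i, Fin (s i)) ℝ)
    (hM : ∀ p q, 0 ≤ M p q) :
    specRad M ≤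
      specRad (Matrix.of fun (i j : Fin k) =>
        Finset.univ.sup'
          (Finset.univ_nonempty_iff.mpr (Fin.pos_iff_nonempty.mp (hs i)))
          (fun u : Fin (s i) => ∑ v : Fin (s j), M ⟨i, u⟩ ⟨j, v⟩)) :=
  specRad_le_upwardRowSumContraction_general s hs M hM
end

section
/- Let n, s ≥ 1. Let A be a nonnegative n×n real matrix, b and c nonnegative vectors in ℝⁿ, and d ≥ 0, and let M = [[A, b],[cᵀ, d]]. Let B be a nonnegative n×s matrix whose i-th row sum equals b_i for every i, let C be the s×n matrix each of whose rows equals cᵀ, and let D be a nonnegative s×s matrix all of whose row sums equal d; set M̃ = [[A, B],[C, D]]. Let ρ = ρ(M) be the spectral radius of M, and suppose (x, y) ∈ ℝⁿ × ℝ is nonnegative, nonzero, and satisfies (xᵀ, y) M = ρ (xᵀ, y). Then there exists a nonnegative vector ỹ ∈ ℝˢ with Σᵢ ỹᵢ = y such that (xᵀ, ỹᵀ) M̃ = ρ (xᵀ, ỹᵀ). -/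
/-!
Put `w = xᵀB`. Since every row of `C` is `cᵀ`, the first block of the lifted equation holds for
any `ỹ` with `∑ ỹᵢ = y`, so only `w + ỹᵀD = ρ ỹᵀ` remains. The last column of the eigen-equation
for `M` reads `∑ wⱼ + y d = ρ y`; together with the row sums `d` of `D` it makes
`u ↦ (w + uD + u) / (ρ + 1)` an affine self-map of the compact convex set `{u ≥ 0, ∑ uᵢ = y}`.
The Birkhoff averages of an orbit are almost fixed by such a map, so `‖Tu - u‖` has minimum `0`
on that set, and a fixed point is the required `ỹ`.
-/

open Matrix

theorem specRad_nonneg_s13 {n : Type*} [Fintype n] [DecidableEq n] (M : Matrix n n ℝ) :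
    0 ≤ specRad M :=
  Real.sSup_nonneg (by rintro _ ⟨z, -, rfl⟩; exact norm_nonneg z)

open Filter Topology Function Set

theorem AffineMap.apply_birkhoffAverage {R E F α : Type*} [DivisionRing R] [AddCommGroup E]
    [Module R E] [AddCommGroup F] [Module R F] (φ : E →ᵃ[R] F) (f : α → α) (g : α → E) {n : ℕ}
    (hn : (n : R) ≠ 0) (x : α) :
    φ (birkhoffAverage R f g n x) = birkhoffAverage R f (φ ∘ g) n x := by
  have hφ : φ ∘ g = φ.linear ∘ g + fun _ => φ 0 := by
    funext p; exact congrFun φ.decomp (g p)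
  have hconst : birkhoffAverage R f (fun _ => φ 0) n = fun _ => φ 0 :=
    birkhoffAverage_of_comp_eq R rfl hn
  rw [hφ, birkhoffAverage_add, Pi.add_apply, Pi.add_apply, hconst,
    ← map_birkhoffAverage R R φ.linear f g n x, congrFun φ.decomp, Pi.add_apply]

theorem Convex.birkhoffAverage_mem {E α : Type*} [AddCommGroup E] [Module ℝ E] {s : Set E}
    (hs : Convex ℝ s) {f : α → α} {g : α → E} {x : α} (hg : ∀ k, g (f^[k] x) ∈ s) {n : ℕ}
    (hn : n ≠ 0) : birkhoffAverage ℝ f g n x ∈ s := by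
  rw [birkhoffAverage, birkhoffSum, Finset.smul_sum]
  refine hs.sum_mem (fun _ _ => by positivity) ?_ fun k _ => hg k
  simp [hn]

theorem IsCompact.exists_isFixedPt_affineMap {E : Type*} [NormedAddCommGroup E] [NormedSpace ℝ E]
    {K : Set E} (hK : IsCompact K) (hKc : Convex ℝ K) (hKne : K.Nonempty) (T : E →ᵃ[ℝ] E)
    (hT : Continuous T) (hTK : MapsTo T K K) : ∃ z ∈ K, IsFixedPt T z := by
  obtain ⟨z, hzK, hz⟩ := hK.exists_isMinOn hKne (f := fun p => dist (T p) p)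
    (hT.dist continuous_id).continuousOn
  obtain ⟨x, hx⟩ := hKne
  have horbit : ∀ k, T^[k] x ∈ K := fun k => hTK.iterate k hx
  have hdefect (n : ℕ) : dist (T z) z ≤ Metric.diam K * (1 / ((n : ℝ) + 1)) := by
    set a := birkhoffAverage ℝ T id (n + 1) x
    have ha : a ∈ K := hKc.birkhoffAverage_mem horbit n.succ_ne_zero
    have hTa : T a = birkhoffAverage ℝ T id (n + 1) (T x) := by
      rw [T.apply_birkhoffAverage _ _ (by positivity)]
      simp [birkhoffAverage, birkhoffSum, ← iterate_succ_apply' T, iterate_succ_apply]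
    calc dist (T z) z ≤ dist (T a) a := hz ha
      _ = dist (T^[n + 1] x) x / (n + 1 : ℕ) := by
        rw [hTa, dist_birkhoffAverage_apply_birkhoffAverage]; rfl
      _ ≤ Metric.diam K * (1 / ((n : ℝ) + 1)) := by
        rw [mul_one_div]; push_cast
        gcongr
        exact Metric.dist_le_diam_of_mem hK.isBounded (horbit _) hx
  have hlim : Tendsto (fun n : ℕ => Metric.diam K * (1 / ((n : ℝ) + 1))) atTop (𝓝 0) := by
    simpa using tendsto_one_div_add_atTop_nhds_zero_nat.const_mul (Metric.diam K)
  exact ⟨z, hzK, dist_le_zero.mp (ge_of_tendsto' hlim hdefect)⟩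

theorem Matrix.sum_vecMul_apply {m n α : Type*} [Fintype m] [Fintype n] [NonUnitalCommSemiring α]
    (v : m → α) (M : Matrix m n α) : ∑ j, (v ᵥ* M) j = ∑ i, v i * ∑ j, M i j := by
  simp only [vecMul, dotProduct, Finset.mul_sum]
  exact Finset.sum_comm

theorem Matrix.vecMul_replicateRow {ι n α : Type*} [Fintype ι] [NonUnitalCommSemiring α]
    (v : ι → α) (c : n → α) : v ᵥ* replicateRow ι c = (∑ i, v i) • c := by
  ext j
  simp [vecMul, dotProduct, Finset.sum_mul]

theorem Sum.smul_elim {R α β M : Type*} [SMul R M] (a : R) (f : α → M) (g : β → M) :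
    a • Sum.elim f g = Sum.elim (a • f) (a • g) :=
  Sum.comp_elim (a • ·) f g

theorem isCompact_setOf_nonneg_sum_eq (ι : Type*) [Fintype ι] (y : ℝ) :
    IsCompact {u : ι → ℝ | 0 ≤ u ∧ ∑ i, u i = y} := by
  refine (isCompact_Icc (a := 0) (b := fun _ => y)).of_isClosed_subset ?_
    fun u hu => ⟨hu.1, fun i => ?_⟩
  · exact isClosed_Ici.inter (isClosed_eq (continuous_finsetSum _ fun i _ => continuous_apply i)
      continuous_const)
  · exact hu.2 ▸ Finset.single_le_sum (fun k _ => hu.1 k) (Finset.mem_univ i)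

theorem convex_setOf_nonneg_sum_eq (ι : Type*) [Fintype ι] (y : ℝ) :
    Convex ℝ {u : ι → ℝ | 0 ≤ u ∧ ∑ i, u i = y} :=
  (convex_Ici 0).inter (convex_hyperplane ⟨fun _ _ => Finset.sum_add_distrib,
    fun _ _ => (Finset.mul_sum _ _ _).symm⟩ y)

theorem exists_nonneg_sum_eq_add_vecMul_eq_smul {ι : Type*} [Fintype ι] [Nonempty ι]
    {D : Matrix ι ι ℝ} (hD : ∀ i j, 0 ≤ D i j) {d : ℝ} (hDrow : ∀ i, ∑ j, D i j = d)
    {w : ι → ℝ} (hw : 0 ≤ w) {ρ y : ℝ} (hρ : 0 ≤ ρ) (hy : 0 ≤ y)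
    (hbalance : ∑ j, w j + y * d = ρ * y) :
    ∃ z : ι → ℝ, 0 ≤ z ∧ ∑ i, z i = y ∧ w + z ᵥ* D = ρ • z := by
  set K := {u : ι → ℝ | 0 ≤ u ∧ ∑ i, u i = y}
  have hρ1 : ρ + 1 ≠ 0 := by positivity
  have hKne : K.Nonempty := ⟨fun _ => y / Fintype.card ι, fun _ => by positivity, by
    simp only [Finset.sum_const, Finset.card_univ, nsmul_eq_mul]
    exact mul_div_cancel₀ y (by positivity)⟩
  -- The shift by the identity keeps the map defined when `ρ = 0`.
  let T : (ι → ℝ) →ᵃ[ℝ] (ι → ℝ) :=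
    { toFun := fun u => (ρ + 1)⁻¹ • (w + u ᵥ* D + u)
      linear := (ρ + 1)⁻¹ • (D.vecMulLinear + LinearMap.id)
      map_vadd' := fun u v => by
        simp only [vadd_eq_add, add_vecMul, LinearMap.smul_apply, LinearMap.add_apply,
          vecMulLinear_apply, LinearMap.id_apply, ← smul_add]
        abel_nf }
  have hTK : MapsTo T K K := by
    rintro u ⟨hu0, husum⟩
    refine ⟨smul_nonneg (by positivity) (add_nonneg (add_nonneg hw ?_) hu0), ?_⟩
    · exact fun j => Finset.sum_nonneg fun i _ => mul_nonneg (hu0 i) (hD i j)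
    · have hsum : ∑ j, (u ᵥ* D) j = y * d := by
        simp only [sum_vecMul_apply, hDrow, ← Finset.sum_mul, husum]
      simp only [T, AffineMap.coe_mk, Pi.smul_apply, Pi.add_apply, smul_eq_mul,
        ← Finset.mul_sum, Finset.sum_add_distrib, hsum, husum]
      field_simp
      linarith
  obtain ⟨z, ⟨hz0, hzsum⟩, hfix⟩ :=
    (isCompact_setOf_nonneg_sum_eq ι y).exists_isFixedPt_affineMap
      (convex_setOf_nonneg_sum_eq ι y) hKne T T.continuous_of_finiteDimensional hTK
  refine ⟨z, hz0, hzsum, ?_⟩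
  have : w + z ᵥ* D + z = (ρ + 1) • z := (inv_smul_eq_iff₀ hρ1).mp hfix
  rw [add_smul, one_smul] at this
  exact add_right_cancel this

theorem expansion_leftEigenvector_lifts_general
    {n s : ℕ} (hs : 1 ≤ s)
    (A : Matrix (Fin n) (Fin n) ℝ) (b c : Fin n → ℝ) (d : ℝ)
    (B : Matrix (Fin n) (Fin s) ℝ) (hB : ∀ i j, 0 ≤ B i j)
    (hBrow : ∀ i, ∑ j, B i j = b i)
    (D : Matrix (Fin s) (Fin s) ℝ) (hD : ∀ i j, 0 ≤ D i j)
    (hDrow : ∀ i, ∑ j, D i j = d)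
    (x : Fin n → ℝ) (y : ℝ) (hx : ∀ i, 0 ≤ x i) (hy : 0 ≤ y)
    (heig : Matrix.vecMul (Sum.elim x (fun _ : Fin 1 => y))
        (Matrix.fromBlocks A
          (Matrix.of fun (i : Fin n) (_ : Fin 1) => b i)
          (Matrix.of fun (_ : Fin 1) (j : Fin n) => c j)
          (Matrix.of fun (_ : Fin 1) (_ : Fin 1) => d)) =
      specRad (Matrix.fromBlocks A
          (Matrix.of fun (i : Fin n) (_ : Fin 1) => b i)
          (Matrix.of fun (_ : Fin 1) (j : Fin n) => c j)
          (Matrix.of fun (_ : Fin 1) (_ : Fin 1) => d)) •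
        Sum.elim x (fun _ : Fin 1 => y)) :
    ∃ yt : Fin s → ℝ, (∀ i, 0 ≤ yt i) ∧ (∑ i, yt i) = y ∧
      Matrix.vecMul (Sum.elim x yt)
          (Matrix.fromBlocks A B
            (Matrix.of fun (_ : Fin s) (j : Fin n) => c j) D) =
        specRad (Matrix.fromBlocks A
            (Matrix.of fun (i : Fin n) (_ : Fin 1) => b i)
            (Matrix.of fun (_ : Fin 1) (j : Fin n) => c j)
            (Matrix.of fun (_ : Fin 1) (_ : Fin 1) => d)) •
          Sum.elim x yt := by
  set ρ := specRad (Matrix.fromBlocks A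
    (Matrix.of fun (i : Fin n) (_ : Fin 1) => b i)
    (Matrix.of fun (_ : Fin 1) (j : Fin n) => c j)
    (Matrix.of fun (_ : Fin 1) (_ : Fin 1) => d))
  rw [vecMul_fromBlocks, Sum.smul_elim, Sum.elim_eq_iff] at heig
  obtain ⟨hxeig, hyeig⟩ := heig
  have hbalance : ∑ j, (x ᵥ* B) j + y * d = ρ * y := by
    rw [sum_vecMul_apply]
    simp_rw [hBrow]
    simpa [vecMul, dotProduct] using congrFun hyeig 0
  have : Nonempty (Fin s) := ⟨⟨0, hs⟩⟩
  have hw : 0 ≤ x ᵥ* B := fun j =>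
    show 0 ≤ ∑ i, x i * B i j from Finset.sum_nonneg fun i _ => mul_nonneg (hx i) (hB i j)
  obtain ⟨yt, hyt0, hytsum, hyteig⟩ :=
    exists_nonneg_sum_eq_add_vecMul_eq_smul hD hDrow hw (specRad_nonneg_s13 _) hy hbalance
  refine ⟨yt, hyt0, hytsum, ?_⟩
  rw [vecMul_fromBlocks, Sum.smul_elim, Sum.elim_eq_iff]
  refine ⟨?_, hyteig⟩
  rw [← hxeig]
  change _ + yt ᵥ* replicateRow (Fin s) c = _ + (fun _ : Fin 1 => y) ᵥ* replicateRow (Fin 1) c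
  simp only [Sum.elim_comp_inl, vecMul_replicateRow, hytsum, Finset.univ_unique,
    Finset.sum_singleton]

/-- A nonnegative nonzero left eigenvector `(x, y)` of `M = [[A, b], [cᵀ, d]]`
for the spectral radius `ρ(M)` lifts to a left eigenvector `(x, ỹ)` of the row
sum expansion `M̃ = [[A, B], [C, D]]`, where `ỹ ≥ 0` and `Σᵢ ỹᵢ = y`. -/
theorem expansion_leftEigenvector_lifts
    {n s : ℕ} (hn : 1 ≤ n) (hs : 1 ≤ s)
    (A : Matrix (Fin n) (Fin n) ℝ) (b c : Fin n → ℝ) (d : ℝ)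
    (hA : ∀ i j, 0 ≤ A i j) (hb : ∀ i, 0 ≤ b i) (hc : ∀ i, 0 ≤ c i) (hd : 0 ≤ d)
    (B : Matrix (Fin n) (Fin s) ℝ) (hB : ∀ i j, 0 ≤ B i j)
    (hBrow : ∀ i, ∑ j, B i j = b i)
    (D : Matrix (Fin s) (Fin s) ℝ) (hD : ∀ i j, 0 ≤ D i j)
    (hDrow : ∀ i, ∑ j, D i j = d)
    (x : Fin n → ℝ) (y : ℝ) (hx : ∀ i, 0 ≤ x i) (hy : 0 ≤ y)
    (hne : Sum.elim x (fun _ : Fin 1 => y) ≠ 0)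
    (heig : Matrix.vecMul (Sum.elim x (fun _ : Fin 1 => y))
        (Matrix.fromBlocks A
          (Matrix.of fun (i : Fin n) (_ : Fin 1) => b i)
          (Matrix.of fun (_ : Fin 1) (j : Fin n) => c j)
          (Matrix.of fun (_ : Fin 1) (_ : Fin 1) => d)) =
      specRad (Matrix.fromBlocks A
          (Matrix.of fun (i : Fin n) (_ : Fin 1) => b i)
          (Matrix.of fun (_ : Fin 1) (j : Fin n) => c j)
          (Matrix.of fun (_ : Fin 1) (_ : Fin 1) => d)) •
        Sum.elim x (fun _ : Fin 1 => y)) :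
    ∃ yt : Fin s → ℝ, (∀ i, 0 ≤ yt i) ∧ (∑ i, yt i) = y ∧
      Matrix.vecMul (Sum.elim x yt)
          (Matrix.fromBlocks A B
            (Matrix.of fun (_ : Fin s) (j : Fin n) => c j) D) =
        specRad (Matrix.fromBlocks A
            (Matrix.of fun (i : Fin n) (_ : Fin 1) => b i)
            (Matrix.of fun (_ : Fin 1) (j : Fin n) => c j)
            (Matrix.of fun (_ : Fin 1) (_ : Fin 1) => d)) •
          Sum.elim x yt :=
  expansion_leftEigenvector_lifts_general hs A b c d B hB hBrow D hD hDrow x y hx hy heig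
end
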